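/- arXiv:2205.00668 — 3 statements merged into one kernel-verified Lean document; each statement's English description precedes it below -/
import Mathlib

section
/- For positive semidefinite symmetric matrices S_t and S_b with S_b = M Q M^T, the matrix A = S_t^† M satisfies tr((A^T S_t A)^† A^T S_b A) = tr(S_t^† S_b), i.e., A attains the maximal value of the LDA objective. -/
open Matrix

/-- `P` is the Moore–Penrose pseudoinverse of `S`. -/
def IsMoorePenrose {D : ℕ} (S P : Matrix (Fin D) (Fin D) ℝ) : Prop :=
  S * P * S = S ∧ P * S * P = P ∧ (S * P).IsSymm ∧ (P * S).IsSymm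

/-- The Moore–Penrose pseudoinverse of a symmetric matrix is symmetric. -/
lemma pinv_symm_of_symm {D : ℕ} {s p : Matrix (Fin D) (Fin D) ℝ}
    (hs : sᵀ = s) (h : IsMoorePenrose s p) : pᵀ = p := by
  obtain ⟨h1, h2, h3, h4⟩ := h
  have h3' : (s * p)ᵀ = s * p := h3
  have h4' : (p * s)ᵀ = p * s := h4
  have e1 : pᵀ * s = s * p := by
    have := h3'
    rwa [transpose_mul, hs] at this
  have e2 : s * pᵀ = p * s := by
    have := h4'
    rwa [transpose_mul, hs] at this
  have h1t : s * pᵀ * s = s := by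
    have := congrArg Matrix.transpose h1
    rwa [transpose_mul, transpose_mul, hs, ← Matrix.mul_assoc] at this
  have k1 : s * p * s * pᵀ = p * s := by rw [h1, e2]
  have comm : s * p = p * s := by
    calc s * p = s * pᵀ * s * p := by rw [h1t]
      _ = (s * pᵀ)ᵀ * (s * p)ᵀ := by rw [e2, h4', h3']; simp only [Matrix.mul_assoc]
      _ = (s * p * (s * pᵀ))ᵀ := (transpose_mul (s * p) (s * pᵀ)).symm
      _ = (s * p * s * pᵀ)ᵀ := by rw [Matrix.mul_assoc (s * p) s pᵀ]
      _ = (p * s)ᵀ := by rw [k1]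
      _ = p * s := h4'
  have e3 : s * pᵀ = s * p := by rw [e2, comm]
  have e4 : pᵀ * s = p * s := by rw [e1, comm]
  have h2t : pᵀ * s * pᵀ = pᵀ := by
    have := congrArg Matrix.transpose h2
    rwa [transpose_mul, transpose_mul, hs, ← Matrix.mul_assoc] at this
  calc pᵀ = pᵀ * s * pᵀ := h2t.symm
    _ = p * s * pᵀ := by rw [e4]
    _ = p * (s * pᵀ) := by rw [Matrix.mul_assoc]
    _ = p * (s * p) := by rw [e3]
    _ = p * s * p := by rw [Matrix.mul_assoc]
    _ = p := h2

/-- For `S_t` symmetric PSD and `S_b = M Q Mᵀ` with `Q` diagonal positive, the matrix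
    `A = S_t† M` attains the maximal LDA objective value:
    `tr((Aᵀ S_t A)† Aᵀ S_b A) = tr(S_t† S_b)`. -/
theorem LDApp_optimality {D C : ℕ}
    (St : Matrix (Fin D) (Fin D) ℝ) (hSt : St.PosSemidef)
    (M : Matrix (Fin D) (Fin C) ℝ) (q : Fin C → ℝ) (hq : ∀ c, 0 < q c)
    (Sb : Matrix (Fin D) (Fin D) ℝ) (hSb : Sb = M * Matrix.diagonal q * Mᵀ)
    (Stp : Matrix (Fin D) (Fin D) ℝ) (hStp : IsMoorePenrose St Stp)
    (A : Matrix (Fin D) (Fin C) ℝ) (hA : A = Stp * M)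
    (P : Matrix (Fin C) (Fin C) ℝ) (hP : IsMoorePenrose (Aᵀ * St * A) P) :
    (P * (Aᵀ * Sb * A)).trace = (Stp * Sb).trace := by
  have hs : Stᵀ = St := hSt.isHermitian
  have hp : Stpᵀ = Stp := pinv_symm_of_symm hs hStp
  obtain ⟨a1, a2, a3, a4⟩ := hStp
  obtain ⟨b1, b2, b3, b4⟩ := hP
  set K : Matrix (Fin C) (Fin C) ℝ := Mᵀ * Stp * M with hK
  have hN : Aᵀ * St * A = K := by
    rw [hA, transpose_mul, hp, hK]
    calc Mᵀ * Stp * St * (Stp * M) = Mᵀ * (Stp * St * Stp) * M := by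
          simp only [Matrix.mul_assoc]
      _ = Mᵀ * Stp * M := by rw [a2, Matrix.mul_assoc]
  have hb : Aᵀ * Sb * A = K * Matrix.diagonal q * K := by
    rw [hA, hSb, transpose_mul, hp, hK]
    simp only [Matrix.mul_assoc]
  rw [hN] at b1
  have lhs : (P * (Aᵀ * Sb * A)).trace = (K * Matrix.diagonal q).trace := by
    rw [hb]
    calc (P * (K * Matrix.diagonal q * K)).trace
        = (P * (K * Matrix.diagonal q) * K).trace := by
          rw [← Matrix.mul_assoc]
      _ = (K * (P * (K * Matrix.diagonal q))).trace := Matrix.trace_mul_comm _ _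
      _ = (K * P * K * Matrix.diagonal q).trace := by
          simp only [Matrix.mul_assoc]
      _ = (K * Matrix.diagonal q).trace := by rw [b1]
  have rhs : (Stp * Sb).trace = (K * Matrix.diagonal q).trace := by
    rw [hSb]
    calc (Stp * (M * Matrix.diagonal q * Mᵀ)).trace
        = (Stp * (M * Matrix.diagonal q) * Mᵀ).trace := by
          simp only [Matrix.mul_assoc]
      _ = (Mᵀ * (Stp * (M * Matrix.diagonal q))).trace := Matrix.trace_mul_comm _ _
      _ = (K * Matrix.diagonal q).trace := by rw [hK]; simp only [Matrix.mul_assoc]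
  rw [lhs, rhs]
end

section
/- Removing any one column from A = S_t^† M preserves optimality: with Â = S_t^† M̂, where M̂ omits the column μ_C - μ, one still has tr((Â^T S_t Â)^† Â^T S_b Â) = tr(S_t^† S_b). -/
open Matrix

lemma mp_unique {n : ℕ} (S Pm Q : Matrix (Fin n) (Fin n) ℝ)
    (hP : IsMoorePenrose S Pm) (hQ : IsMoorePenrose S Q) : Pm = Q := by
  obtain ⟨hP1, hP2, hP3, hP4⟩ := hP
  obtain ⟨hQ1, hQ2, hQ3, hQ4⟩ := hQ
  have hSP : S * Pm = S * Q := by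
    calc S * Pm = (S * Pm)ᵀ := hP3.symm
    _ = Pmᵀ * Sᵀ := by rw [transpose_mul]
    _ = Pmᵀ * (S * Q * S)ᵀ := by rw [hQ1]
    _ = Pmᵀ * (Sᵀ * (S * Q)ᵀ) := by rw [transpose_mul]
    _ = (S * Pm)ᵀ * (S * Q)ᵀ := by simp only [transpose_mul, mul_assoc]
    _ = (S * Pm) * (S * Q) := by rw [hP3, hQ3]
    _ = (S * Pm * S) * Q := by noncomm_ring
    _ = S * Q := by rw [hP1]
  have hPS : Pm * S = Q * S := by
    calc Pm * S = (Pm * S)ᵀ := hP4.symm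
    _ = Sᵀ * Pmᵀ := by rw [transpose_mul]
    _ = (S * Q * S)ᵀ * Pmᵀ := by rw [hQ1]
    _ = (Q * S)ᵀ * (Sᵀ * Pmᵀ) := by simp only [transpose_mul, mul_assoc]
    _ = (Q * S) * (Pm * S)ᵀ := by rw [hQ4, transpose_mul]
    _ = (Q * S) * (Pm * S) := by rw [hP4]
    _ = Q * (S * Pm * S) := by noncomm_ring
    _ = Q * S := by rw [hP1]
  calc Pm = Pm * S * Pm := hP2.symm
  _ = Q * S * Pm := by rw [hPS]
  _ = Q * (S * Pm) := by rw [mul_assoc]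
  _ = Q * (S * Q) := by rw [hSP]
  _ = Q := by rw [← mul_assoc, hQ2]

lemma vmvmv {D C : ℕ} (M : Matrix (Fin D) (Fin C) ℝ) (a : Fin C → ℝ) :
    vecMulVec (M *ᵥ a) (M *ᵥ a) = M * vecMulVec a a * Mᵀ := by
  ext i j
  simp only [vecMulVec_apply, mul_apply, mulVec, dotProduct, transpose_apply,
    Finset.sum_mul, Finset.mul_sum]
  exact Finset.sum_congr rfl fun k _ => Finset.sum_congr rfl fun l _ => by ring

/-- Dropping the column `μ_C − μ` from `A = S_t† M` preserves optimality of the LDA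
    objective: with `Â = S_t† M̂`, still `tr((Âᵀ S_t Â)† Âᵀ S_b Â) = tr(S_t† S_b)`. -/
theorem LDApp_optimality_drop_column {D C : ℕ}
    (Nc : Fin (C + 1) → ℕ) (hNc : ∀ c, 0 < Nc c) (N : ℕ) (hN : N = ∑ c, Nc c)
    (μc : Fin (C + 1) → Fin D → ℝ) (μ : Fin D → ℝ)
    (hμ : (N : ℝ) • μ = ∑ c, (Nc c : ℝ) • μc c)
    (Sb : Matrix (Fin D) (Fin D) ℝ)
    (hSb : Sb = ∑ c, ((Nc c : ℝ) / (N : ℝ)) • Matrix.vecMulVec (μc c - μ) (μc c - μ))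
    (Mhat : Matrix (Fin D) (Fin C) ℝ)
    (hM : Mhat = Matrix.of (fun i c => μc c.castSucc i - μ i))
    (St : Matrix (Fin D) (Fin D) ℝ) (hSt : St.PosSemidef)
    (Stp : Matrix (Fin D) (Fin D) ℝ) (hStp : IsMoorePenrose St Stp)
    (Ahat : Matrix (Fin D) (Fin C) ℝ) (hA : Ahat = Stp * Mhat)
    (P : Matrix (Fin C) (Fin C) ℝ) (hP : IsMoorePenrose (Ahatᵀ * St * Ahat) P) :
    (P * (Ahatᵀ * Sb * Ahat)).trace = (Stp * Sb).trace := by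
  obtain ⟨hS1, hS2, hS3, hS4⟩ := hStp
  have hSsym : Stᵀ = St := by
    have h := hSt.1
    rwa [Matrix.IsHermitian, Matrix.conjTranspose_eq_transpose_of_trivial] at h
  -- Stp is symmetric
  have hQmp : IsMoorePenrose St Stpᵀ := by
    refine ⟨?_, ?_, ?_, ?_⟩
    · calc St * Stpᵀ * St = (Stᵀ * Stp * Stᵀ)ᵀ := by
            simp only [transpose_mul, transpose_transpose, mul_assoc]
      _ = St := by rw [hSsym, hS1, hSsym]
    · calc Stpᵀ * St * Stpᵀ = (Stp * Stᵀ * Stp)ᵀ := by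
            simp only [transpose_mul, transpose_transpose, mul_assoc]
      _ = Stpᵀ := by rw [hSsym, hS2]
    · unfold Matrix.IsSymm
      calc (St * Stpᵀ)ᵀ = Stp * Stᵀ := by simp [transpose_mul]
      _ = Stp * St := by rw [hSsym]
      _ = (Stp * St)ᵀ := hS4.symm
      _ = Stᵀ * Stpᵀ := by simp [transpose_mul]
      _ = St * Stpᵀ := by rw [hSsym]
    · unfold Matrix.IsSymm
      calc (Stpᵀ * St)ᵀ = Stᵀ * Stp := by simp [transpose_mul]
      _ = St * Stp := by rw [hSsym]
      _ = (St * Stp)ᵀ := hS3.symm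
      _ = Stpᵀ * Stᵀ := by simp [transpose_mul]
      _ = Stpᵀ * St := by rw [hSsym]
  have hPsym : Stpᵀ = Stp := mp_unique St Stpᵀ Stp hQmp ⟨hS1, hS2, hS3, hS4⟩
  -- the weighted sum of centered means vanishes
  have hvsum : ∑ c, (Nc c : ℝ) • (μc c - μ) = 0 := by
    have hNr : (N : ℝ) = ∑ c, (Nc c : ℝ) := by rw [hN]; push_cast; ring
    calc ∑ c, (Nc c : ℝ) • (μc c - μ)
        = (∑ c, (Nc c : ℝ) • μc c) - (∑ c, (Nc c : ℝ)) • μ := by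
          rw [Finset.sum_smul]; rw [← Finset.sum_sub_distrib]
          exact Finset.sum_congr rfl fun c _ => smul_sub _ _ _
    _ = (N : ℝ) • μ - (N : ℝ) • μ := by rw [← hμ, ← hNr]
    _ = 0 := sub_self _
  -- coefficient vectors
  set NL : ℝ := (Nc (Fin.last C) : ℝ) with hNL
  have hNLne : NL ≠ 0 := by
    simp only [hNL]
    exact_mod_cast (hNc (Fin.last C)).ne'
  set u : Fin (C + 1) → Fin C → ℝ :=
    fun c => Fin.lastCases (fun d => -((Nc d.castSucc : ℝ) / NL)) (fun d => Pi.single d 1) c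
    with hu
  have hv : ∀ c, Mhat *ᵥ u c = μc c - μ := by
    refine Fin.lastCases ?_ ?_
    · -- last case
      funext i
      have h0 := congrFun hvsum i
      rw [Fin.sum_univ_castSucc] at h0
      simp only [Finset.sum_apply, Pi.smul_apply, Pi.sub_apply, Pi.zero_apply,
        smul_eq_mul, Pi.add_apply] at h0
      have hlast : NL * (μc (Fin.last C) i - μ i)
          = -∑ d : Fin C, (Nc d.castSucc : ℝ) * (μc d.castSucc i - μ i) := by
        rw [hNL]; linarith [h0]
      simp only [hu, Fin.lastCases_last, mulVec, dotProduct, hM, of_apply, Pi.sub_apply]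
      have : ∑ d : Fin C, (μc d.castSucc i - μ i) * -((Nc d.castSucc : ℝ) / NL)
          = (-∑ d : Fin C, (Nc d.castSucc : ℝ) * (μc d.castSucc i - μ i)) / NL := by
        rw [← Finset.sum_neg_distrib, Finset.sum_div]
        exact Finset.sum_congr rfl fun d _ => by rw [div_eq_mul_inv, neg_div, div_eq_mul_inv]; ring
      rw [this, ← hlast, mul_div_assoc, mul_comm]
      field_simp
    · intro d
      funext i
      simp only [hu, Fin.lastCases_castSucc]
      rw [mulVec_single]
      simp [hM]
  -- Sb as Mhat * W * Mhatᵀ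
  set W : Matrix (Fin C) (Fin C) ℝ :=
    ∑ c, ((Nc c : ℝ) / (N : ℝ)) • vecMulVec (u c) (u c) with hW
  have hSbW : Sb = Mhat * W * Mhatᵀ := by
    rw [hSb, hW]
    simp only [Matrix.mul_sum, Matrix.sum_mul]
    refine Finset.sum_congr rfl fun c _ => ?_
    rw [← hv c, vmvmv, Matrix.mul_smul, Matrix.smul_mul]
  -- key matrix identities
  set G : Matrix (Fin C) (Fin C) ℝ := Mhatᵀ * Stp * Mhat with hG
  have hStS : Stp * (St * (Stp * Mhat)) = Stp * Mhat := by
    calc Stp * (St * (Stp * Mhat)) = (Stp * St * Stp) * Mhat := by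
          simp only [Matrix.mul_assoc]
    _ = Stp * Mhat := by rw [hS2]
  have hAG : Ahatᵀ * St * Ahat = G := by
    rw [hA, hG, transpose_mul, hPsym]
    calc Mhatᵀ * Stp * St * (Stp * Mhat) = Mhatᵀ * (Stp * (St * (Stp * Mhat))) := by
          simp only [Matrix.mul_assoc]
    _ = Mhatᵀ * (Stp * Mhat) := by rw [hStS]
    _ = Mhatᵀ * Stp * Mhat := by rw [Matrix.mul_assoc]
  have hASbA : Ahatᵀ * Sb * Ahat = G * W * G := by
    rw [hA, hSbW, hG, transpose_mul, hPsym]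
    simp only [Matrix.mul_assoc]
  have hGPG : G * P * G = G := by
    have := hP.1
    rwa [hAG] at this
  rw [hASbA, hSbW]
  calc (P * (G * W * G)).trace = ((G * W) * (G * P)).trace := by
        rw [trace_mul_comm]; simp only [mul_assoc]
  _ = ((G * P) * (G * W)).trace := trace_mul_comm _ _
  _ = ((G * P * G) * W).trace := by simp only [mul_assoc]
  _ = (G * W).trace := by rw [hGPG]
  _ = ((Mhatᵀ * (Stp * (Mhat * W)))).trace := by rw [hG]; simp only [Matrix.mul_assoc]
  _ = ((Stp * (Mhat * W)) * Mhatᵀ).trace := trace_mul_comm _ _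
  _ = (Stp * (Mhat * W * Mhatᵀ)).trace := by simp only [Matrix.mul_assoc]
end

section
/- Under the assumptions that S_w and R = M̂^T S_w^{-1} M̂ are invertible and S_b = M̂ Q̃ M̂^T for a symmetric matrix Q̃, the matrix Â_w = S_w^{-1} M̂ satisfies tr((Â_w^T S_t Â_w)^{-1} Â_w^T S_b Â_w) = tr(S_t^{-1} S_b), where S_t = S_w + S_b. -/
open Matrix

/-- If `S_w` and `R = M̂ᵀ S_w⁻¹ M̂` are invertible and `S_b = M̂ Q̃ M̂ᵀ` with `Q̃`
    symmetric, then `Â_w = S_w⁻¹ M̂` attains the maximal LDA objective value: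
    `tr((Â_wᵀ S_t Â_w)⁻¹ Â_wᵀ S_b Â_w) = tr(S_t⁻¹ S_b)` where `S_t = S_w + S_b`. -/
theorem Aw_optimality {D k : ℕ}
    (Sw : Matrix (Fin D) (Fin D) ℝ) (hSw : Sw.PosDef)
    (Mhat : Matrix (Fin D) (Fin k) ℝ)
    (hR : IsUnit (Mhatᵀ * Sw⁻¹ * Mhat).det)
    (Qt : Matrix (Fin k) (Fin k) ℝ) (hQt : Qt.IsSymm)
    (Sb St : Matrix (Fin D) (Fin D) ℝ)
    (hSb : Sb = Mhat * Qt * Mhatᵀ) (hSt : St = Sw + Sb)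
    (Aw : Matrix (Fin D) (Fin k) ℝ) (hAw : Aw = Sw⁻¹ * Mhat) :
    ((Awᵀ * St * Aw)⁻¹ * (Awᵀ * Sb * Aw)).trace = (St⁻¹ * Sb).trace := by
  obtain ⟨R, hRdef⟩ : ∃ R, R = Mhatᵀ * Sw⁻¹ * Mhat := ⟨_, rfl⟩
  rw [← hRdef] at hR
  have hSwdet : IsUnit Sw.det := hSw.det_pos.ne'.isUnit
  have hSwinv' : Sw * Sw⁻¹ = 1 := Matrix.mul_nonsing_inv Sw hSwdet
  have hSwsymm : Swᵀ = Sw := hSw.isHermitian.eq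
  have hSwinvT : (Sw⁻¹)ᵀ = Sw⁻¹ := by
    rw [Matrix.transpose_nonsing_inv, hSwsymm]
  -- collapse lemmas (right-associated)
  have c1 : ∀ {n : ℕ} (X : Matrix (Fin D) (Fin n) ℝ), Sw * (Sw⁻¹ * X) = X := by
    intro n X; rw [← Matrix.mul_assoc, hSwinv', Matrix.one_mul]
  have c2 : ∀ {n : ℕ} (X : Matrix (Fin k) (Fin n) ℝ),
      Mhatᵀ * (Sw⁻¹ * (Mhat * X)) = R * X := by
    intro n X
    rw [hRdef]
    simp only [Matrix.mul_assoc]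
  have c2' : Mhatᵀ * (Sw⁻¹ * Mhat) = R := by
    rw [hRdef, Matrix.mul_assoc]
  have c4 : ∀ {n : ℕ} (X : Matrix (Fin k) (Fin n) ℝ), R⁻¹ * (R * X) = X := by
    intro n X; rw [← Matrix.mul_assoc, Matrix.nonsing_inv_mul R hR, Matrix.one_mul]
  have hAwT : Awᵀ = Mhatᵀ * Sw⁻¹ := by
    rw [hAw, Matrix.transpose_mul, hSwinvT]
  have hA1 : Awᵀ * Sb * Aw = R * Qt * R := by
    rw [hAwT, hAw, hSb]
    simp only [Matrix.mul_assoc, c2]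
    simp only [c2', ← Matrix.mul_assoc]
  have hA2 : Awᵀ * St * Aw = R * (1 + Qt * R) := by
    rw [hSt, Matrix.mul_add, Matrix.add_mul, hA1, hAwT, hAw, Matrix.mul_add,
      Matrix.mul_one]
    simp only [Matrix.mul_assoc, c1]
    simp only [c2', ← Matrix.mul_assoc]
  have hdetSt : St.det = Sw.det * (1 + R * Qt).det := by
    have hfact : St = Sw * (1 + Sw⁻¹ * (Mhat * Qt) * Mhatᵀ) := by
      rw [hSt, hSb, Matrix.mul_add, Matrix.mul_one]
      congr 1
      simp only [Matrix.mul_assoc, c1]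
    rw [hfact, Matrix.det_mul, Matrix.det_one_add_mul_comm]
    congr 2
    rw [hRdef]
    simp only [Matrix.mul_assoc]
  have hdetQR : (1 + Qt * R).det = (1 + R * Qt).det := Matrix.det_one_add_mul_comm Qt R
  by_cases hStdet : IsUnit St.det
  · -- invertible case
    have hRQ : IsUnit (1 + R * Qt).det := by
      rw [hdetSt] at hStdet
      exact isUnit_of_mul_isUnit_right hStdet
    have hQR : IsUnit (1 + Qt * R).det := by rw [hdetQR]; exact hRQ
    have hQRinv : (1 + Qt * R)⁻¹ * (1 + Qt * R) = 1 := Matrix.nonsing_inv_mul _ hQR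
    have hQRinv' : (1 + Qt * R) * (1 + Qt * R)⁻¹ = 1 := Matrix.mul_nonsing_inv _ hQR
    have hRQinv : (1 + R * Qt)⁻¹ * (1 + R * Qt) = 1 := Matrix.nonsing_inv_mul _ hRQ
    have hRQinv' : (1 + R * Qt) * (1 + R * Qt)⁻¹ = 1 := Matrix.mul_nonsing_inv _ hRQ
    -- push-through identity
    have hpush : (1 + R * Qt)⁻¹ * R = R * (1 + Qt * R)⁻¹ := by
      have h1 : R * (1 + Qt * R) = (1 + R * Qt) * R := by noncomm_ring
      calc (1 + R * Qt)⁻¹ * R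
          = (1 + R * Qt)⁻¹ * (R * ((1 + Qt * R) * (1 + Qt * R)⁻¹)) := by
            rw [hQRinv', Matrix.mul_one]
        _ = (1 + R * Qt)⁻¹ * ((1 + R * Qt) * (R * (1 + Qt * R)⁻¹)) := by
            rw [← Matrix.mul_assoc R, h1, Matrix.mul_assoc]
        _ = R * (1 + Qt * R)⁻¹ := by
            rw [← Matrix.mul_assoc, hRQinv, Matrix.one_mul]
    -- explicit inverse of St
    have hW : Qt * (1 + R * Qt)⁻¹ + Qt * (R * (Qt * (1 + R * Qt)⁻¹)) = Qt := by
      have : Qt * (1 + R * Qt)⁻¹ + Qt * (R * (Qt * (1 + R * Qt)⁻¹))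
          = Qt * ((1 + R * Qt) * (1 + R * Qt)⁻¹) := by noncomm_ring
      rw [this, hRQinv', Matrix.mul_one]
    have hStinv : St⁻¹ = Sw⁻¹ - Sw⁻¹ * Mhat * (Qt * (1 + R * Qt)⁻¹) * (Mhatᵀ * Sw⁻¹) := by
      apply Matrix.inv_eq_right_inv
      rw [hSt, hSb, Matrix.mul_sub, Matrix.add_mul, Matrix.add_mul, hSwinv']
      simp only [Matrix.mul_assoc, c1, c2]
      rw [← sub_sub]
      have collect : Mhat * (Qt * (Mhatᵀ * Sw⁻¹))
          - Mhat * (Qt * ((1 + R * Qt)⁻¹ * (Mhatᵀ * Sw⁻¹)))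
          - Mhat * (Qt * (R * (Qt * ((1 + R * Qt)⁻¹ * (Mhatᵀ * Sw⁻¹)))))
          = Mhat * ((Qt - (Qt * (1 + R * Qt)⁻¹ + Qt * (R * (Qt * (1 + R * Qt)⁻¹))))
              * (Mhatᵀ * Sw⁻¹)) := by
        simp only [Matrix.sub_mul, Matrix.add_mul, Matrix.mul_sub, Matrix.mul_add,
          Matrix.mul_assoc]
        abel
      rw [add_sub_assoc, add_sub_assoc, collect, hW, sub_self, Matrix.zero_mul, Matrix.mul_zero, add_zero]
    have hLHS : (Awᵀ * St * Aw)⁻¹ * (Awᵀ * Sb * Aw) = (1 + Qt * R)⁻¹ * (Qt * R) := by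
      rw [hA2, hA1, Matrix.mul_inv_rev]
      simp only [Matrix.mul_assoc, c4]
    have hRHS : St⁻¹ * Sb
        = Sw⁻¹ * Mhat * (Qt - Qt * ((1 + R * Qt)⁻¹ * (R * Qt))) * Mhatᵀ := by
      rw [hStinv, hSb]
      simp only [Matrix.mul_sub, Matrix.sub_mul, Matrix.mul_assoc, c2]
    have thelp : ∀ (W : Matrix (Fin k) (Fin k) ℝ),
        (Sw⁻¹ * Mhat * W * Mhatᵀ).trace = (W * R).trace := by
      intro W
      rw [Matrix.trace_mul_comm (Sw⁻¹ * Mhat * W) Mhatᵀ]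
      have h6 : Mhatᵀ * (Sw⁻¹ * Mhat * W) = R * W := by
        simp only [Matrix.mul_assoc, c2]
      rw [h6, Matrix.trace_mul_comm]
    rw [hLHS, hRHS, thelp, Matrix.sub_mul, Matrix.trace_sub]
    have e3 : Qt * ((1 + R * Qt)⁻¹ * (R * Qt)) * R
        = Qt * R * ((1 + Qt * R)⁻¹ * (Qt * R)) := by
      calc Qt * ((1 + R * Qt)⁻¹ * (R * Qt)) * R
          = Qt * ((1 + R * Qt)⁻¹ * R) * (Qt * R) := by simp only [Matrix.mul_assoc]
        _ = Qt * (R * (1 + Qt * R)⁻¹) * (Qt * R) := by rw [hpush]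
        _ = Qt * R * ((1 + Qt * R)⁻¹ * (Qt * R)) := by simp only [Matrix.mul_assoc]
    rw [e3, Matrix.trace_mul_comm (Qt * R)]
    have key : (1 + Qt * R)⁻¹ * (Qt * R) + (1 + Qt * R)⁻¹ * (Qt * R) * (Qt * R)
        = Qt * R := by
      have h5 : (1 + Qt * R)⁻¹ * (Qt * R) + (1 + Qt * R)⁻¹ * (Qt * R) * (Qt * R)
          = (1 + Qt * R)⁻¹ * ((1 + Qt * R) * (Qt * R)) := by noncomm_ring
      rw [h5, ← Matrix.mul_assoc, hQRinv, Matrix.one_mul]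
    have htr := congrArg Matrix.trace key
    rw [Matrix.trace_add] at htr
    linarith
  · -- non-invertible case: both sides are zero
    have hSt0 : St⁻¹ = 0 := Matrix.nonsing_inv_apply_not_isUnit St hStdet
    have hQRdet : ¬ IsUnit (1 + Qt * R).det := by
      intro h
      apply hStdet
      rw [hdetSt, ← hdetQR]
      exact hSwdet.mul h
    have hA20 : (Awᵀ * St * Aw)⁻¹ = 0 := by
      apply Matrix.nonsing_inv_apply_not_isUnit
      rw [hA2, Matrix.det_mul]
      intro h
      exact hQRdet (isUnit_of_mul_isUnit_right h)
    rw [hSt0, hA20, Matrix.zero_mul, Matrix.zero_mul]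
    simp [Matrix.trace_zero]
end
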